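/- Let P : [0,1] → L(H) be a continuously differentiable family of projections and suppose φ₀ ∈ H satisfies P(0)φ₀ = φ₀. If U solves U'(t) = Q(t)U(t) with U(0) = I and Q(t) = P'(t)P(t) − P(t)P'(t), then φ(t) := U(t)φ₀ satisfies P(t)φ(t) = φ(t) for all t ∈ [0,1]. -/

import Mathlib

/-!
Along the flow `U' = Q U` of the generator `Q = P'P - PP'`, the identity `P' = QP - PQ` (a
consequence of differentiating `P² = P`) shows that `Ψ(t) = (P(t) - 1) U(t) P(0)` solves the
same linear equation `Ψ' = QΨ`. Since `Ψ(0) = 0`, Grönwall's inequality forces `Ψ ≡ 0`, which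
says that `U(t)` maps the range of `P(0)` into the range of `P(t)`.
-/

open Set

theorem commutator_sub_commutator_eq_of_isIdempotentElem {R : Type*} [Ring R] {p p' : R}
    (hp : IsIdempotentElem p) (hp' : p' * p + p * p' = p') :
    (p' * p - p * p') * p - p * (p' * p - p * p') = p' := by
  have hpp'p : p * p' * p = 0 := by
    have h := congrArg (p * ·) hp'
    simp only [mul_add, ← mul_assoc, hp.eq] at h
    exact add_eq_right.mp h
  calc (p' * p - p * p') * p - p * (p' * p - p * p')
      = p' * (p * p) - p * p' * p - p * p' * p + (p * p) * p' := by noncomm_ring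
    _ = p' * p + p * p' := by rw [hp.eq, hpp'p]; abel
    _ = p' := hp'

section NormedAlgebra

variable {𝔸 : Type*} [NormedRing 𝔸] [NormedAlgebra ℝ 𝔸]

theorem HasDerivAt.mul_add_mul_eq_of_isIdempotentElem {P : ℝ → 𝔸} {P' : 𝔸} {t : ℝ}
    (hP : HasDerivAt P P' t) (hproj : ∀ s, IsIdempotentElem (P s)) :
    P' * P t + P t * P' = P' := by
  have hsq : HasDerivAt (fun s => P s * P s) (P' * P t + P t * P') t := hP.mul hP
  simp only [fun s => (hproj s).eq] at hsq
  exact hsq.unique hP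

theorem HasDerivAt.sub_one_mul_mul_const {P U Q : ℝ → 𝔸} {P' : 𝔸} {t : ℝ} (R : 𝔸)
    (hP : HasDerivAt P P' t) (hU : HasDerivAt U (Q t * U t) t)
    (hcomm : Q t * P t - P t * Q t = P') :
    HasDerivAt (fun s => (P s - 1) * U s * R) (Q t * ((P t - 1) * U t * R)) t := by
  refine (((hP.sub_const 1).mul hU).mul_const R).congr_deriv ?_
  rw [← hcomm]
  noncomm_ring

theorem eq_zero_of_hasDerivAt_mul_left_of_eq_zero {Q Ψ : ℝ → 𝔸} {a b : ℝ}
    (hQ : ContinuousOn Q (Icc a b)) (hΨ : ∀ t ∈ Icc a b, HasDerivAt Ψ (Q t * Ψ t) t)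
    (ha : Ψ a = 0) : ∀ t ∈ Icc a b, Ψ t = 0 := by
  obtain ⟨C, hC⟩ := isCompact_Icc.exists_bound_of_continuousOn hQ
  refine eq_zero_of_abs_deriv_le_mul_abs_self_of_eq_zero_right (K := C)
    (fun t ht => (hΨ t ht).continuousAt.continuousWithinAt)
    (fun t ht => (hΨ t (Ico_subset_Icc_self ht)).hasDerivWithinAt) ha fun t ht => ?_
  calc ‖Q t * Ψ t‖ ≤ ‖Q t‖ * ‖Ψ t‖ := norm_mul_le _ _
    _ ≤ C * ‖Ψ t‖ := by gcongr; exact hC t (Ico_subset_Icc_self ht)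

theorem mul_mul_eq_of_hasDerivAt_commutator_mul {P P' Q U : ℝ → 𝔸} {a b : ℝ}
    (hPd : ∀ t, HasDerivAt P (P' t) t) (hP'c : Continuous P')
    (hproj : ∀ t, IsIdempotentElem (P t)) (hQ : ∀ t, Q t = P' t * P t - P t * P' t)
    (hU : ∀ t, HasDerivAt U (Q t * U t) t) (hUa : U a = 1) :
    ∀ t ∈ Icc a b, P t * U t * P a = U t * P a := by
  have hPc : Continuous P := continuous_iff_continuousAt.2 fun t => (hPd t).continuousAt
  have hQc : ContinuousOn Q (Icc a b) := by
    rw [funext hQ]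
    exact ((hP'c.mul hPc).sub (hPc.mul hP'c)).continuousOn
  have hcomm : ∀ t, Q t * P t - P t * Q t = P' t := fun t => by
    rw [hQ]
    exact commutator_sub_commutator_eq_of_isIdempotentElem (hproj t)
      ((hPd t).mul_add_mul_eq_of_isIdempotentElem hproj)
  have hΨ := eq_zero_of_hasDerivAt_mul_left_of_eq_zero (Ψ := fun s => (P s - 1) * U s * P a) hQc
    (fun t _ => (hPd t).sub_one_mul_mul_const (P a) (hU t) (hcomm t))
    (by simp [hUa, sub_mul, (hproj a).eq])
  intro t ht
  simpa [sub_mul, sub_eq_zero] using hΨ t ht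

end NormedAlgebra

theorem transported_vector_stays_in_range_general
    {E : Type*} [NormedAddCommGroup E] [InnerProductSpace ℂ E]
    (P P' : ℝ → (E →L[ℂ] E))
    (hPd : ∀ t : ℝ, HasDerivAt P (P' t) t)
    (hP'c : Continuous P')
    (hproj : ∀ t : ℝ, P t ∘L P t = P t)
    (Q : ℝ → (E →L[ℂ] E))
    (hQ : ∀ t : ℝ, Q t = P' t ∘L P t - P t ∘L P' t)
    (U : ℝ → (E →L[ℂ] E))
    (hU : ∀ t : ℝ, HasDerivAt U (Q t ∘L U t) t)
    (hU0 : U 0 = 1)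
    (φ₀ : E) (hφ₀ : P 0 φ₀ = φ₀) :
    ∀ t ∈ Icc (0:ℝ) 1, P t (U t φ₀) = U t φ₀ := by
  intro t ht
  have h := congrArg (· φ₀) (mul_mul_eq_of_hasDerivAt_commutator_mul hPd hP'c hproj hQ hU hU0 t ht)
  simpa only [mul_apply_eq_comp, hφ₀] using h

theorem transported_vector_stays_in_range
    {E : Type*} [NormedAddCommGroup E] [InnerProductSpace ℂ E] [FiniteDimensional ℂ E]
    (P P' : ℝ → (E →L[ℂ] E))
    (hPd : ∀ t : ℝ, HasDerivAt P (P' t) t)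
    (hP'c : Continuous P')
    (hproj : ∀ t : ℝ, P t ∘L P t = P t)
    (Q : ℝ → (E →L[ℂ] E))
    (hQ : ∀ t : ℝ, Q t = P' t ∘L P t - P t ∘L P' t)
    (U : ℝ → (E →L[ℂ] E))
    (hU : ∀ t : ℝ, HasDerivAt U (Q t ∘L U t) t)
    (hU0 : U 0 = 1)
    (φ₀ : E) (hφ₀ : P 0 φ₀ = φ₀) :
    ∀ t ∈ Icc (0:ℝ) 1, P t (U t φ₀) = U t φ₀ :=
  transported_vector_stays_in_range_general P P' hPd hP'c hproj Q hQ U hU hU0 φ₀ hφ₀
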